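/- Let n and m be positive even integers and let Λ be a complex (m/2)×n matrix. Define B = 2i·Θ_n·[−Λ† Λᵀ]·Γ_m, where [−Λ† Λᵀ] denotes the n×m horizontal concatenation of −Λ† and Λᵀ. Then B·Bᵀ = −4·Θ_n·Re(Λ†·Λ)·Θ_n, where Re denotes the entrywise real part. -/

import Mathlib

open Matrix
open scoped Kronecker ComplexConjugate

noncomputable section

/-- For an even positive integer `m`, `Theta R m` is the `m × m` block-diagonal matrix
`I_{m/2} ⊗ J` with `J = [[0,1],[-1,0]]`, written entrywise. -/
def Theta (R : Type*) [Ring R] (m : ℕ) : Matrix (Fin m) (Fin m) R :=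
  Matrix.of fun i j =>
    if (i : ℕ) % 2 = 0 ∧ (j : ℕ) = (i : ℕ) + 1 then 1
    else if (j : ℕ) % 2 = 0 ∧ (i : ℕ) = (j : ℕ) + 1 then -1 else 0

/-- The `m × m` permutation matrix `P_m` sending `(a₁, …, a_m)` to
`(a₁, a₃, …, a_{m−1}, a₂, a₄, …, a_m)` (for `m` even). -/
def Pmat (m : ℕ) : Matrix (Fin m) (Fin m) ℂ :=
  Matrix.of fun i j =>
    if ((i : ℕ) < m / 2 ∧ (j : ℕ) = 2 * (i : ℕ))
        ∨ (m / 2 ≤ (i : ℕ) ∧ (j : ℕ) = 2 * ((i : ℕ) - m / 2) + 1) then 1 else 0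

/-- The block-diagonal matrix `I_{m/2} ⊗ M` with `M = (1/2)·[[1, i],[1, −i]]`
(for `m` even), written entrywise. -/
def blockM (m : ℕ) : Matrix (Fin m) (Fin m) ℂ :=
  Matrix.of fun i j =>
    if (i : ℕ) / 2 = (j : ℕ) / 2 then
      (if (j : ℕ) % 2 = 0 then (1 / 2 : ℂ)
       else if (i : ℕ) % 2 = 0 then Complex.I / 2 else -(Complex.I / 2))
    else 0

/-- `Γ_m = P_m·(I_{m/2} ⊗ M)`. -/
def Gamma (m : ℕ) : Matrix (Fin m) (Fin m) ℂ := Pmat m * blockM m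

/-- Horizontal concatenation of two `n × h` matrices into an `n × 2h` matrix. -/
def hconcat {n h : ℕ} (X Y : Matrix (Fin n) (Fin h) ℂ) : Matrix (Fin n) (Fin (2 * h)) ℂ :=
  Matrix.of fun i j =>
    if hj : (j : ℕ) < h then X i ⟨j, hj⟩
    else Y i ⟨(j : ℕ) - h, by have := j.isLt; omega⟩

/-- Entrywise complexification of a real matrix. -/
def cmap {m n : Type*} (M : Matrix m n ℝ) : Matrix m n ℂ := M.map Complex.ofReal

/-! `Γ Γᵀ = P (I ⊗ M Mᵀ) Pᵀ` with `M Mᵀ = ½ [[0, 1], [1, 0]]`, and conjugation by the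
even/odd permutation `P` turns `I ⊗ [[0, 1], [1, 0]]` into the block swap `[[0, I], [I, 0]]`.
Hence `[X Y] Γ Γᵀ [X Y]ᵀ = ½ (Y Xᵀ + X Yᵀ)`, which for `X = -Λ†`, `Y = Λᵀ` is
`-½ (conj (Λ† Λ) + Λ† Λ) = -Re (Λ† Λ)`. The factors `(2i)² = -4` and `Θᵀ = -Θ` finish. -/

theorem Theta_transpose (R : Type*) [Ring R] (n : ℕ) : (Theta R n)ᵀ = -Theta R n := by
  ext i j
  rw [transpose_apply, neg_apply]
  simp only [Theta, of_apply]
  split_ifs <;> first | omega | simp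

def halvesEquiv (h : ℕ) : Fin h ⊕ Fin h ≃ Fin (2 * h) :=
  finSumFinEquiv.trans (finCongr (two_mul h).symm)

def pairsEquiv (h : ℕ) : Fin h × Fin 2 ≃ Fin (2 * h) :=
  finProdFinEquiv.trans (finCongr (mul_comm h 2))

@[simp] theorem val_halvesEquiv_inl {h : ℕ} (a : Fin h) : (halvesEquiv h (.inl a) : ℕ) = a := rfl

@[simp] theorem val_halvesEquiv_inr {h : ℕ} (a : Fin h) : (halvesEquiv h (.inr a) : ℕ) = h + a :=
  rfl

@[simp] theorem val_pairsEquiv {h : ℕ} (a : Fin h) (b : Fin 2) :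
    (pairsEquiv h (a, b) : ℕ) = b + 2 * a := rfl

def halvesToPairs (h : ℕ) : Fin h ⊕ Fin h → Fin h × Fin 2 := Sum.elim (·, 0) (·, 1)

def blockSwap (h : ℕ) : Matrix (Fin (2 * h)) (Fin (2 * h)) ℂ :=
  reindex (halvesEquiv h) (halvesEquiv h) (fromBlocks 0 1 1 0)

def Mmat : Matrix (Fin 2) (Fin 2) ℂ := (1 / 2 : ℂ) • !![1, Complex.I; 1, -Complex.I]

theorem hconcat_eq_submatrix_fromCols {n h : ℕ} (X Y : Matrix (Fin n) (Fin h) ℂ) :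
    hconcat X Y = (fromCols X Y).submatrix id (halvesEquiv h).symm := by
  ext i j
  obtain ⟨a | a, rfl⟩ := (halvesEquiv h).surjective j <;> simp [hconcat]

theorem hconcat_mul_blockSwap_mul_transpose_hconcat {n h : ℕ}
    (X Y W Z : Matrix (Fin n) (Fin h) ℂ) :
    hconcat X Y * blockSwap h * (hconcat W Z)ᵀ = Y * Wᵀ + X * Zᵀ := by
  rw [hconcat_eq_submatrix_fromCols, hconcat_eq_submatrix_fromCols, blockSwap, reindex_apply,
    transpose_submatrix, submatrix_mul_equiv, submatrix_mul_equiv, transpose_fromCols,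
    fromCols_mul_fromBlocks, fromCols_mul_fromRows]
  simp

theorem Pmat_eq_submatrix_one (h : ℕ) :
    Pmat (2 * h) = (1 : Matrix _ _ ℂ).submatrix
      (pairsEquiv h ∘ halvesToPairs h ∘ (halvesEquiv h).symm) id := by
  ext i j
  obtain ⟨a | a, rfl⟩ := (halvesEquiv h).surjective i <;>
    simp [Pmat, one_apply, Fin.ext_iff, halvesToPairs] <;> exact if_congr (by omega) rfl rfl

theorem blockM_eq_reindex_kronecker (h : ℕ) :
    blockM (2 * h) = reindex (pairsEquiv h) (pairsEquiv h) (1 ⊗ₖ Mmat) := by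
  ext i j
  obtain ⟨⟨a, b⟩, rfl⟩ := (pairsEquiv h).surjective i
  obtain ⟨⟨a', b'⟩, rfl⟩ := (pairsEquiv h).surjective j
  have hdiv (x : ℕ) : (1 + 2 * x) / 2 = x := by omega
  fin_cases b <;> fin_cases b' <;>
    simp [blockM, Mmat, one_apply, Fin.ext_iff, hdiv, div_eq_inv_mul, neg_ite]

theorem Mmat_mul_transpose : Mmat * Mmatᵀ = (1 / 2 : ℂ) • !![0, 1; 1, 0] := by
  ext i j
  fin_cases i <;> fin_cases j <;>
    simp [Mmat, mul_apply, mul_mul_mul_comm _ Complex.I] <;> norm_num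

theorem blockM_mul_transpose (h : ℕ) :
    blockM (2 * h) * (blockM (2 * h))ᵀ
      = (1 / 2 : ℂ) • reindex (pairsEquiv h) (pairsEquiv h) (1 ⊗ₖ !![0, 1; 1, 0]) := by
  rw [blockM_eq_reindex_kronecker, transpose_reindex, reindex_apply, reindex_apply,
    submatrix_mul_equiv, ← kroneckerMap_transpose, ← mul_kronecker_mul, transpose_one,
    Matrix.mul_one, Mmat_mul_transpose, kronecker_smul]
  rfl

theorem one_kronecker_swap_submatrix_halvesToPairs (h : ℕ) :
    (1 ⊗ₖ !![0, 1; 1, 0] : Matrix (Fin h × Fin 2) (Fin h × Fin 2) ℂ).submatrix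
      (halvesToPairs h) (halvesToPairs h) = fromBlocks 0 1 1 0 := by
  ext (a | a) (a' | a') <;> simp [halvesToPairs, one_apply]

theorem Gamma_mul_transpose (h : ℕ) :
    Gamma (2 * h) * (Gamma (2 * h))ᵀ = (1 / 2 : ℂ) • blockSwap h := by
  have hP (A : Matrix (Fin (2 * h)) (Fin (2 * h)) ℂ) :
      Pmat (2 * h) * A =
        A.submatrix (pairsEquiv h ∘ halvesToPairs h ∘ (halvesEquiv h).symm) id := by
    rw [Pmat_eq_submatrix_one]
    exact one_submatrix_mul _ (Equiv.refl _) A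
  rw [Gamma, hP, transpose_submatrix, ← submatrix_mul _ _ _ _ _ Function.bijective_id,
    blockM_mul_transpose, blockSwap, ← one_kronecker_swap_submatrix_halvesToPairs]
  simp only [reindex_apply, submatrix_smul, Pi.smul_apply, submatrix_submatrix,
    ← Function.comp_assoc, Equiv.symm_comp_self, Function.id_comp]

theorem transpose_mul_map_star_add_conjTranspose_mul {m n : Type*} [Fintype m]
    (Λ : Matrix m n ℂ) :
    Λᵀ * Λ.map star + Λᴴ * Λ = (2 : ℂ) • (Λᴴ * Λ).map (fun z => (z.re : ℂ)) := by
  have hconj : Λᵀ * Λ.map star = (Λᴴ * Λ).map (starRingEnd ℂ) := by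
    ext i j
    simp [mul_apply]
  ext i j
  rw [hconj, Matrix.add_apply, map_apply, add_comm, Complex.add_conj]
  simp

theorem B_mul_B_transpose_general
    (n h : ℕ)
    (Λ : Matrix (Fin h) (Fin n) ℂ)
    (B : Matrix (Fin n) (Fin (2 * h)) ℂ)
    (hB : B = (2 * Complex.I) • (Theta ℂ n * hconcat (-Λᴴ) Λᵀ * Gamma (2 * h))) :
    B * Bᵀ = (-4 : ℂ) • (Theta ℂ n * (Λᴴ * Λ).map (fun z => (z.re : ℂ)) * Theta ℂ n) := by
  subst hB
  set H := hconcat (-Λᴴ) Λᵀ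
  have hmiddle :
      H * (Gamma (2 * h) * (Gamma (2 * h))ᵀ) * Hᵀ = -(Λᴴ * Λ).map (fun z => (z.re : ℂ)) := by
    rw [Gamma_mul_transpose, Matrix.mul_smul, Matrix.smul_mul,
      hconcat_mul_blockSwap_mul_transpose_hconcat, transpose_neg, conjTranspose_transpose,
      transpose_transpose, Matrix.mul_neg, Matrix.neg_mul, ← neg_add,
      transpose_mul_map_star_add_conjTranspose_mul, smul_neg, smul_smul]
    norm_num
  have hI : (2 * Complex.I) * (2 * Complex.I) = -4 := by
    linear_combination 4 * Complex.I_mul_I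
  calc _ = ((2 * Complex.I) * (2 * Complex.I)) •
        (Theta ℂ n * (H * (Gamma (2 * h) * (Gamma (2 * h))ᵀ) * Hᵀ) * (Theta ℂ n)ᵀ) := by
        simp only [transpose_smul, Matrix.smul_mul, Matrix.mul_smul, smul_smul, transpose_mul,
          Matrix.mul_assoc]
    _ = _ := by
      rw [hmiddle, Theta_transpose, hI]
      simp only [Matrix.mul_neg, Matrix.neg_mul, neg_neg, Matrix.mul_assoc]

/-- `B·Bᵀ = −4·Θ_n·Re(Λ†·Λ)·Θ_n` for `B = 2i·Θ_n·[−Λ† Λᵀ]·Γ_m`. -/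
theorem B_mul_B_transpose
    (n h : ℕ) (hn : Even n) (hn0 : 0 < n) (hh0 : 0 < h)
    (Λ : Matrix (Fin h) (Fin n) ℂ)
    (B : Matrix (Fin n) (Fin (2 * h)) ℂ)
    (hB : B = (2 * Complex.I) • (Theta ℂ n * hconcat (-Λᴴ) Λᵀ * Gamma (2 * h))) :
    B * Bᵀ = (-4 : ℂ) • (Theta ℂ n * (Λᴴ * Λ).map (fun z => (z.re : ℂ)) * Theta ℂ n) :=
  B_mul_B_transpose_general n h Λ B hB
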